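/- Let (g_n) be a sequence of positive random variables with n·g_n → G almost surely, where P(0 < G < ∞) = 1. Define t(c) = inf{n ≥ 1 : g_n/(n+1) ≤ c} for c > 0. Then c·t(c)² → G almost surely as c → 0, equivalently √c · t(c) → √G almost surely. -/

import Mathlib

open MeasureTheory Filter

/-- Asymptotic run-length of the APO stopping rule: if `g_n > 0` and
`n g_n → G` a.s. with `P(0 < G) = 1`, then for
`t(c) = inf{n ≥ 1 : g_n/(n+1) ≤ c}` one has `c · t(c)² → G` a.s. as `c → 0`,
equivalently `√c · t(c) → √G` a.s. -/
theorem ao_stopping_time_asymptotics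
    {Ω : Type*} [MeasurableSpace Ω] (μ : Measure Ω) [IsProbabilityMeasure μ]
    (g : ℕ → Ω → ℝ) (G : Ω → ℝ)
    (hpos : ∀ n, ∀ᵐ ω ∂μ, 0 < g n ω)
    (hconv : ∀ᵐ ω ∂μ, Tendsto (fun (n : ℕ) => (n : ℝ) * g n ω) atTop (nhds (G ω)))
    (hG : ∀ᵐ ω ∂μ, 0 < G ω)
    (t : ℝ → Ω → ℕ)
    (ht : ∀ c ω, t c ω = sInf {n : ℕ | 1 ≤ n ∧ g n ω / (n + 1) ≤ c}) :
    (∀ᵐ ω ∂μ, Tendsto (fun c => c * (t c ω : ℝ) ^ 2)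
        (nhdsWithin 0 (Set.Ioi 0)) (nhds (G ω))) ∧
    (∀ᵐ ω ∂μ, Tendsto (fun c => Real.sqrt c * (t c ω : ℝ))
        (nhdsWithin 0 (Set.Ioi 0)) (nhds (Real.sqrt (G ω)))) := by
  have hposAll : ∀ᵐ ω ∂μ, ∀ n, 0 < g n ω := ae_all_iff.2 hpos
  have main : ∀ᵐ ω ∂μ, Tendsto (fun c => c * (t c ω : ℝ) ^ 2)
      (nhdsWithin 0 (Set.Ioi 0)) (nhds (G ω)) := by
    filter_upwards [hposAll, hconv, hG] with ω hg hGc hGp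
    set h : ℕ → ℝ := fun n => g n ω / (n + 1) with hhdef
    have hpos' : ∀ n : ℕ, 0 < h n := fun n => div_pos (hg n) (by positivity)
    -- h tends to 0
    have hh0 : Tendsto h atTop (nhds 0) := by
      have hbig : Tendsto (fun n : ℕ => (n : ℝ) * ((n : ℝ) + 1)) atTop atTop :=
        tendsto_natCast_atTop_atTop.atTop_mul_atTop₀
          (tendsto_atTop_add_const_right _ 1 tendsto_natCast_atTop_atTop)
      have h1 : Tendsto (fun n : ℕ => ((n : ℝ) * g n ω) * ((n : ℝ) * ((n : ℝ) + 1))⁻¹)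
          atTop (nhds (G ω * 0)) := hGc.mul (tendsto_inv_atTop_zero.comp hbig)
      rw [mul_zero] at h1
      refine h1.congr' ?_
      filter_upwards [eventually_ge_atTop 1] with n hn
      have hn0 : (n : ℝ) ≠ 0 := Nat.cast_ne_zero.2 (by omega)
      have hn1 : (n : ℝ) + 1 ≠ 0 := by positivity
      simp only [hhdef]
      field_simp [hhdef]
    -- the defining set is nonempty for c > 0
    have hne : ∀ c : ℝ, 0 < c → {n : ℕ | 1 ≤ n ∧ g n ω / (n + 1) ≤ c}.Nonempty := by
      intro c hc
      obtain ⟨N, hN⟩ := (hh0.eventually (gt_mem_nhds hc)).exists_forall_of_atTop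
      exact ⟨max N 1, le_max_right _ _, (hN _ (le_max_left _ _)).le⟩
    have hmem : ∀ c : ℝ, 0 < c → 1 ≤ t c ω ∧ h (t c ω) ≤ c := by
      intro c hc
      have := Nat.sInf_mem (hne c hc)
      rw [← ht c ω] at this
      exact this
    have hmin : ∀ c : ℝ, ∀ m : ℕ, m < t c ω → 1 ≤ m → c < h m := by
      intro c m hm h1
      have : m ∉ {n : ℕ | 1 ≤ n ∧ g n ω / (n + 1) ≤ c} := by
        apply Nat.notMem_of_lt_sInf
        rwa [← ht c ω]
      by_contra hcon
      push_neg at hcon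
      exact this ⟨h1, hcon⟩
    -- t c ω → ∞ as c → 0⁺
    have hT : Tendsto (fun c => t c ω) (nhdsWithin 0 (Set.Ioi 0)) atTop := by
      rw [tendsto_atTop]
      intro N
      obtain ⟨ε, hε0, hεle⟩ : ∃ ε : ℝ, 0 < ε ∧ ∀ n, 1 ≤ n → n ≤ N → ε ≤ h n := by
        have hFne : (insert (1 : ℝ) ((Finset.Icc 1 N).image h)).Nonempty :=
          ⟨1, Finset.mem_insert_self _ _⟩
        refine ⟨(insert (1 : ℝ) ((Finset.Icc 1 N).image h)).min' hFne, ?_, ?_⟩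
        · rcases Finset.mem_insert.1
            ((insert (1 : ℝ) ((Finset.Icc 1 N).image h)).min'_mem hFne) with h1 | h2
          · rw [h1]; norm_num
          · obtain ⟨n, _, hn⟩ := Finset.mem_image.1 h2
            rw [← hn]; exact hpos' n
        · intro n h1 h2
          exact Finset.min'_le _ _ (Finset.mem_insert_of_mem
            (Finset.mem_image_of_mem h (Finset.mem_Icc.2 ⟨h1, h2⟩)))
      filter_upwards [Ioo_mem_nhdsGT_of_mem (Set.left_mem_Ico.2 hε0)] with c hc
      by_contra hlt
      push_neg at hlt
      obtain ⟨ht1, ht2⟩ := hmem c hc.1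
      have : ε ≤ h (t c ω) := hεle _ ht1 hlt.le
      linarith [hc.2]
    -- ratio limits
    have hratio : Tendsto (fun n : ℕ => (n : ℝ) / ((n : ℝ) + 1)) atTop (nhds 1) :=
      tendsto_natCast_div_add_atTop (1 : ℝ)
    have hratio' : Tendsto (fun n : ℕ => ((n : ℝ) + 1) / (n : ℝ)) atTop (nhds 1) := by
      have h1 : Tendsto (fun n : ℕ => 1 + (n : ℝ)⁻¹) atTop (nhds (1 + 0)) :=
        tendsto_const_nhds.add (tendsto_inv_atTop_zero.comp tendsto_natCast_atTop_atTop)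
      rw [add_zero] at h1
      refine h1.congr' ?_
      filter_upwards [eventually_ge_atTop 1] with n hn
      have hn0 : (n : ℝ) ≠ 0 := Nat.cast_ne_zero.2 (by omega)
      field_simp
    -- lower comparison sequence
    have hlow : Tendsto (fun c => ((t c ω : ℝ) * g (t c ω) ω) * ((t c ω : ℝ) / ((t c ω : ℝ) + 1)))
        (nhdsWithin 0 (Set.Ioi 0)) (nhds (G ω)) := by
      have hS : Tendsto (fun n : ℕ => ((n : ℝ) * g n ω) * ((n : ℝ) / ((n : ℝ) + 1)))
          atTop (nhds (G ω * 1)) := hGc.mul hratio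
      rw [mul_one] at hS
      exact hS.comp hT
    -- upper comparison sequence
    have hT' : Tendsto (fun c => t c ω - 1) (nhdsWithin 0 (Set.Ioi 0)) atTop := by
      rw [tendsto_atTop]
      intro N
      filter_upwards [(tendsto_atTop.1 hT) (N + 1)] with c hc
      omega
    have hup : Tendsto (fun c => (((t c ω - 1 : ℕ) : ℝ) * g (t c ω - 1) ω) *
        ((((t c ω - 1 : ℕ) : ℝ) + 1) / ((t c ω - 1 : ℕ) : ℝ)))
        (nhdsWithin 0 (Set.Ioi 0)) (nhds (G ω)) := by
      have hS : Tendsto (fun n : ℕ => ((n : ℝ) * g n ω) * (((n : ℝ) + 1) / (n : ℝ)))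
          atTop (nhds (G ω * 1)) := hGc.mul hratio'
      rw [mul_one] at hS
      exact hS.comp hT'
    refine tendsto_of_tendsto_of_tendsto_of_le_of_le' hlow hup ?_ ?_
    · -- lower bound
      filter_upwards [self_mem_nhdsWithin, (tendsto_atTop.1 hT) 2] with c hc h2
      have hc0 : (0 : ℝ) < c := hc
      obtain ⟨ht1, ht2⟩ := hmem c hc0
      set n := t c ω with hn
      have hn0 : (0 : ℝ) < (n : ℝ) := by exact_mod_cast Nat.lt_of_lt_of_le Nat.zero_lt_one ht1
      have hn1 : (0 : ℝ) < (n : ℝ) + 1 := by positivity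
      have key : g n ω / ((n : ℝ) + 1) ≤ c := ht2
      have e1 : ((n : ℝ) * g n ω) * ((n : ℝ) / ((n : ℝ) + 1))
          = (g n ω / ((n : ℝ) + 1)) * (n : ℝ) ^ 2 := by
        field_simp
      rw [e1]
      have := mul_le_mul_of_nonneg_right key (sq_nonneg (n : ℝ))
      linarith
    · -- upper bound
      filter_upwards [self_mem_nhdsWithin, (tendsto_atTop.1 hT) 2] with c hc h2
      have hc0 : (0 : ℝ) < c := hc
      set m := t c ω - 1 with hm
      have hmlt : m < t c ω := by omega
      have hm1 : 1 ≤ m := by omega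
      have key : c < g m ω / ((m : ℝ) + 1) := hmin c m hmlt hm1
      have hmcast : ((t c ω : ℕ) : ℝ) = (m : ℝ) + 1 := by
        have : t c ω = m + 1 := by omega
        rw [this]; push_cast; ring
      have hm0 : (0 : ℝ) < (m : ℝ) := by exact_mod_cast Nat.lt_of_lt_of_le Nat.zero_lt_one hm1
      have hm01 : (0 : ℝ) < (m : ℝ) + 1 := by positivity
      have e1 : ((m : ℝ) * g m ω) * (((m : ℝ) + 1) / (m : ℝ))
          = (g m ω / ((m : ℝ) + 1)) * ((m : ℝ) + 1) ^ 2 := by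
        field_simp
      rw [hmcast, e1]
      have := mul_le_mul_of_nonneg_right key.le (sq_nonneg ((m : ℝ) + 1))
      linarith
  refine ⟨main, ?_⟩
  filter_upwards [main] with ω hm
  have hsq : Tendsto (fun c => Real.sqrt (c * (t c ω : ℝ) ^ 2))
      (nhdsWithin 0 (Set.Ioi 0)) (nhds (Real.sqrt (G ω))) :=
    (Real.continuous_sqrt.tendsto _).comp hm
  refine Tendsto.congr' ?_ hsq
  filter_upwards [self_mem_nhdsWithin] with c hc
  rw [Real.sqrt_mul (le_of_lt hc), Real.sqrt_sq (Nat.cast_nonneg _)]
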